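/- arXiv:2110.09181 — 2 statements merged into one kernel-verified Lean document; each statement's English description precedes it below -/
import Mathlib

section
/- Membership via iterated partial derivatives: for every regular expression E over α and every word w : List α, one has w ∈ matches E if and only if there exists H ∈ ∂_w(E) with H nullable, where ∂ is the extension of the Antimirov partial derivative to words (∂_[](E) = {E}, ∂_{w · a}(E) = ⋃_{K ∈ ∂_w(E)} ∂ₐ(K)). -/
open RegularExpression

open scoped Classical in
/-- The finite set of *derived terms* of a regular expression. -/
noncomputable def derivedTerms {α : Type*} :
    RegularExpression α → Finset (RegularExpression α)
  | zero => ∅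
  | epsilon => ∅
  | char _ => {1}
  | plus P Q => derivedTerms P ∪ derivedTerms Q
  | comp P Q => (derivedTerms P).image (fun K => K * Q) ∪ derivedTerms Q
  | RegularExpression.star P => (derivedTerms P).image (fun K => K * RegularExpression.star P)

/-- The *literal length* of a regular expression: the number of occurrences
of letters of the alphabet in it. -/
def litLength {α : Type*} : RegularExpression α → ℕ
  | zero => 0
  | epsilon => 0
  | char _ => 1
  | plus P Q => litLength P + litLength Q
  | comp P Q => litLength P + litLength Q
  | RegularExpression.star P => litLength P

open scoped Classical in
/-- The finite set of *Antimirov partial derivatives* of a regular expression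
with respect to a letter `a`. -/
noncomputable def aderiv {α : Type*} (a : α) :
    RegularExpression α → Finset (RegularExpression α)
  | zero => ∅
  | epsilon => ∅
  | char b => if b = a then {1} else ∅
  | plus P Q => aderiv a P ∪ aderiv a Q
  | comp P Q =>
      if [] ∈ P.matches' then (aderiv a P).image (fun K => K * Q) ∪ aderiv a Q
      else (aderiv a P).image (fun K => K * Q)
  | RegularExpression.star P => (aderiv a P).image (fun K => K * RegularExpression.star P)

open scoped Classical in
/-- Extension of the Antimirov partial derivative to words:
`∂_[](E) = {E}` and `∂_{w · a}(E) = ⋃_{K ∈ ∂_w(E)} ∂ₐ(K)`. -/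
noncomputable def aderivWord {α : Type*} (E : RegularExpression α)
    (w : List α) : Finset (RegularExpression α) :=
  w.foldl (fun s a => s.biUnion (fun K => aderiv a K)) {E}

/-!
Antimirov's partial derivatives split Brzozowski's derivative: the languages of the
`K ∈ ∂ₐ(E)` together make up `{x | a :: x ∈ L(E)}`. Hence `a :: x` is matched by some member
of a finite set `S` iff `x` is matched by some member of `⋃_{E ∈ S} ∂ₐ(E)`; iterating this
along `w` reduces membership of `w` to membership of the empty word.
-/

namespace RegularExpression

variable {α : Type*}

theorem matchEpsilon_iff_nil_mem_matches' (P : RegularExpression α) :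
    P.matchEpsilon ↔ [] ∈ P.matches' := by
  classical
  rw [← rmatch_iff_matches', rmatch]

theorem mem_matches'_deriv_iff [DecidableEq α] (P : RegularExpression α) (a : α) (x : List α) :
    x ∈ (P.deriv a).matches' ↔ a :: x ∈ P.matches' := by
  rw [← rmatch_iff_matches', ← rmatch_iff_matches', rmatch]

open scoped Classical in
theorem iSup_image_mul_matches' (s : Finset (RegularExpression α)) (Q : RegularExpression α) :
    ⨆ H ∈ s.image (fun K => K * Q), H.matches' = (⨆ K ∈ s, K.matches') * Q.matches' := by
  simp only [Finset.iSup_finset_image, matches'_mul, Language.iSup_mul]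

theorem matches'_deriv_eq_iSup_aderiv [DecidableEq α] (P : RegularExpression α) (a : α) :
    (P.deriv a).matches' = ⨆ K ∈ aderiv a P, K.matches' := by
  classical
  induction P with
  | zero => simp [aderiv, deriv_zero, ← bot_eq_zero]
  | epsilon => simp [aderiv, deriv_one, ← bot_eq_zero]
  | char b => by_cases h : b = a <;> simp [aderiv, deriv, h, ← bot_eq_zero]
  | plus P Q ihP ihQ =>
    rw [deriv, aderiv, matches'_add, ihP, ihQ, Finset.iSup_union, add_eq_sup]
  | comp P Q ihP ihQ =>
    have hP := matchEpsilon_iff_nil_mem_matches' P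
    by_cases hnull : [] ∈ P.matches'
    · rw [deriv, if_pos (hP.2 hnull), aderiv, if_pos hnull, Finset.iSup_union, matches'_add,
        add_eq_sup, matches'_mul, iSup_image_mul_matches', ihP, ihQ]
    · rw [deriv, if_neg (mt hP.1 hnull), aderiv, if_neg hnull, matches'_mul,
        iSup_image_mul_matches', ihP]
  | star P ihP =>
    rw [deriv, aderiv, matches'_mul, iSup_image_mul_matches', ihP]

theorem cons_mem_matches'_iff_exists_aderiv (P : RegularExpression α) (a : α) (x : List α) :
    a :: x ∈ P.matches' ↔ ∃ K ∈ aderiv a P, x ∈ K.matches' := by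
  classical
  rw [← mem_matches'_deriv_iff, matches'_deriv_eq_iSup_aderiv]
  simp only [Language.mem_iSup, exists_prop]

open scoped Classical in
theorem exists_nullable_mem_foldl_aderiv_iff (S : Finset (RegularExpression α)) (w : List α) :
    (∃ H ∈ w.foldl (fun s a => s.biUnion (fun K => aderiv a K)) S, [] ∈ H.matches') ↔
      ∃ E ∈ S, w ∈ E.matches' := by
  induction w generalizing S with
  | nil => rfl
  | cons a w ih =>
    simp only [List.foldl_cons, ih, Finset.mem_biUnion, cons_mem_matches'_iff_exists_aderiv]
    constructor
    · rintro ⟨K, ⟨E, hE, hK⟩, hw⟩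
      exact ⟨E, hE, K, hK, hw⟩
    · rintro ⟨E, hE, K, hK, hw⟩
      exact ⟨K, ⟨E, hE, hK⟩, hw⟩

end RegularExpression

theorem matches_iff_exists_nullable_aderivWord_general {α : Type*}
    (E : RegularExpression α) (w : List α) :
    w ∈ E.matches' ↔ ∃ H ∈ aderivWord E w, [] ∈ H.matches' := by
  rw [aderivWord, RegularExpression.exists_nullable_mem_foldl_aderiv_iff]
  simp only [Finset.mem_singleton, exists_eq_left]

/-- Membership via iterated partial derivatives: `w ∈ matches E` iff some
`H ∈ ∂_w(E)` is nullable. -/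
theorem matches_iff_exists_nullable_aderivWord {α : Type*} [DecidableEq α]
    (E : RegularExpression α) (w : List α) :
    w ∈ E.matches' ↔ ∃ H ∈ aderivWord E w, [] ∈ H.matches' :=
  matches_iff_exists_nullable_aderivWord_general E w
end

section
/- Iterated partial derivatives with respect to nonempty words are derived terms: for every regular expression E over α, every letter a ∈ α and every word w : List α, one has ∂_{a :: w}(E) ⊆ DT(E), where ∂ is the extension of the Antimirov partial derivative to words. In particular, the derived-term automaton of E has at most ℓ(E) + 1 reachable states. -/
/-!
`DT(E)` contains `∂ₐ(E)` and is closed under every `∂ₐ`, so by induction on `w` it contains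
`∂_{a :: w}(E)`. The closure rests on `∂ₐ(P · Q) ⊆ ∂ₐ(P) · Q ∪ ∂ₐ(Q)`: in `DT(P*)` a term
`K · P*` derives to `∂ₐ(K) · P* ∪ ∂ₐ(P) · P*`, both inside `DT(P) · P*`. The bound holds since
each letter occurrence contributes at most one derived term.
-/

open RegularExpression

section

open scoped Classical

variable {α : Type*}

theorem card_derivedTerms_le_litLength (E : RegularExpression α) :
    (derivedTerms E).card ≤ litLength E := by
  induction E with
  | zero | epsilon | char => simp [derivedTerms, litLength]
  | plus P Q hP hQ =>
    exact (Finset.card_union_le _ _).trans (Nat.add_le_add hP hQ)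
  | comp P Q hP hQ =>
    exact (Finset.card_union_le _ _).trans
      (Nat.add_le_add (Finset.card_image_le.trans hP) hQ)
  | star P hP => exact Finset.card_image_le.trans hP

theorem aderiv_mul_subset (a : α) (P Q : RegularExpression α) :
    aderiv a (P * Q) ⊆ (aderiv a P).image (· * Q) ∪ aderiv a Q := by
  rw [← comp_def, aderiv]
  split_ifs
  exacts [subset_rfl, Finset.subset_union_left]

theorem aderiv_subset_derivedTerms (a : α) (E : RegularExpression α) :
    aderiv a E ⊆ derivedTerms E := by
  induction E with
  | zero | epsilon => simp [aderiv, derivedTerms]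
  | char b =>
    simp only [aderiv, derivedTerms]
    split_ifs <;> simp
  | plus P Q hP hQ => exact Finset.union_subset_union hP hQ
  | comp P Q hP hQ =>
    exact (aderiv_mul_subset a P Q).trans
      (Finset.union_subset_union (Finset.image_subset_image hP) hQ)
  | star P hP => exact Finset.image_subset_image hP

theorem aderiv_subset_derivedTerms_of_mem (a : α) {E K : RegularExpression α}
    (hK : K ∈ derivedTerms E) : aderiv a K ⊆ derivedTerms E := by
  induction E generalizing K with
  | zero | epsilon => simp [derivedTerms] at hK
  | char b =>
    rw [derivedTerms, Finset.mem_singleton] at hK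
    simp [hK, ← one_def, aderiv]
  | plus P Q hP hQ =>
    rcases Finset.mem_union.mp hK with hK | hK
    · exact (hP hK).trans Finset.subset_union_left
    · exact (hQ hK).trans Finset.subset_union_right
  | comp P Q hP hQ =>
    rcases Finset.mem_union.mp hK with hK | hK
    · obtain ⟨K', hK', rfl⟩ := Finset.mem_image.mp hK
      exact (aderiv_mul_subset a K' Q).trans (Finset.union_subset_union
        (Finset.image_subset_image (hP hK')) (aderiv_subset_derivedTerms a Q))
    · exact (hQ hK).trans Finset.subset_union_right
  | star P hP =>
    obtain ⟨K', hK', rfl⟩ := Finset.mem_image.mp hK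
    refine (aderiv_mul_subset a K' P.star).trans (Finset.union_subset ?_ ?_)
    · exact Finset.image_subset_image (hP hK')
    · exact Finset.image_subset_image (aderiv_subset_derivedTerms a P)

theorem foldl_biUnion_aderiv_subset_derivedTerms {E : RegularExpression α}
    {S : Finset (RegularExpression α)} (hS : S ⊆ derivedTerms E) (w : List α) :
    w.foldl (fun s a => s.biUnion (aderiv a)) S ⊆ derivedTerms E := by
  induction w generalizing S with
  | nil => exact hS
  | cons b w ih =>
    exact ih (Finset.biUnion_subset.mpr fun K hK =>
      aderiv_subset_derivedTerms_of_mem b (hS hK))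

end

open scoped Classical in
theorem aderivWord_cons_subset_derivedTerms_general {α : Type*}
    (E : RegularExpression α) (a : α) (w : List α) :
    aderivWord E (a :: w) ⊆ derivedTerms E ∧
      (insert E (derivedTerms E)).card ≤ litLength E + 1 := by
  constructor
  · have hfirst :
        aderivWord E (a :: w) = w.foldl (fun s b => s.biUnion (aderiv b)) (aderiv a E) := by
      rw [aderivWord, List.foldl_cons, Finset.singleton_biUnion]
    rw [hfirst]
    exact foldl_biUnion_aderiv_subset_derivedTerms (aderiv_subset_derivedTerms a E) w
  · exact (Finset.card_insert_le _ _).trans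
      (Nat.add_le_add_right (card_derivedTerms_le_litLength E) 1)

open scoped Classical in
/-- Iterated partial derivatives with respect to nonempty words are derived
terms, and the derived-term automaton has at most `ℓ(E) + 1` reachable
states. -/
theorem aderivWord_cons_subset_derivedTerms {α : Type*} [DecidableEq α]
    (E : RegularExpression α) (a : α) (w : List α) :
    aderivWord E (a :: w) ⊆ derivedTerms E ∧
      (insert E (derivedTerms E)).card ≤ litLength E + 1 :=
  aderivWord_cons_subset_derivedTerms_general E a w
end
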